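/- arXiv:1511.02123 — 2 statements merged into one kernel-verified Lean document; each statement's English description precedes it below -/
import Mathlib

section
/- If α ⊥ β and γ ⊥ δ are finite binary words and both α·(γ δ) and β·(γ δ) are defined (i.e., γ and δ are not proper prefixes of α or β except as allowed by the prefix-substitution), then t_{γ,δ}⁻¹ ∘ t_{α,β} ∘ t_{γ,δ} = t_{α·(γ δ), β·(γ δ)}, where μ·(γ δ) denotes the word obtained from μ by replacing a prefix γ by δ or a prefix δ by γ, and equals μ if μ is incomparable to both γ and δ. -/
/-- Finite binary words. -/
abbrev Word := List Bool
/-- Cantor space `{0,1}^ℕ`. -/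
abbrev Cantor := ℕ → Bool

/-- `x` has the finite word `α` as a prefix. -/
def hasPrefix (α : Word) (x : Cantor) : Prop :=
  ∀ i, i < α.length → x i = α.getD i false

instance (α : Word) (x : Cantor) : Decidable (hasPrefix α x) :=
  Nat.decidableBallLT _ _

/-- Concatenate a finite word with an infinite sequence. -/
def wcat (α : Word) (y : Cantor) : Cantor :=
  fun n => if n < α.length then α.getD n false else y (n - α.length)

/-- The prefix transposition `t_{α,β}` of Cantor space. -/
def t (α β : Word) (x : Cantor) : Cantor :=
  if hasPrefix α x then wcat β (fun n => x (n + α.length))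
  else if hasPrefix β x then wcat α (fun n => x (n + β.length))
  else x

/-- `α ⊥ β`: neither word is a prefix of the other. -/
def Incomp (α β : Word) : Prop := ¬ α <+: β ∧ ¬ β <+: α

/-- The basic clopen set `μ𝔠` of sequences with prefix `μ`. -/
def prefSet (μ : Word) : Set Cantor := {x | hasPrefix μ x}

/-- Partial prefix substitution `μ · (γ δ)`; `none` when undefined. -/
def wsub (γ δ μ : Word) : Option Word :=
  if γ <+: μ then some (δ ++ μ.drop γ.length)
  else if δ <+: μ then some (γ ++ μ.drop δ.length)
  else if ¬ μ <+: γ ∧ ¬ μ <+: δ then some μ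
  else none

lemma hasPrefix_wcat (μ : Word) (y : Cantor) : hasPrefix μ (wcat μ y) := by
  intro i hi; simp [wcat, hi]

lemma tail_wcat (μ : Word) (y : Cantor) : (fun n => wcat μ y (n + μ.length)) = y := by
  funext n; simp [wcat]

lemma wcat_eq_self {μ : Word} {x : Cantor} (h : hasPrefix μ x) :
    wcat μ (fun n => x (n + μ.length)) = x := by
  funext n
  by_cases hn : n < μ.length
  · simp only [wcat, if_pos hn]; exact (h n hn).symm
  · simp only [wcat, if_neg hn]
    congr 1
    omega

lemma prefix_of_hasPrefix {μ ν : Word} {x : Cantor} (hμ : hasPrefix μ x) (hν : hasPrefix ν x)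
    (h : μ.length ≤ ν.length) : μ <+: ν := by
  rw [List.prefix_iff_eq_take]
  apply List.ext_getElem (by simp [h])
  intro i h1 h2
  have hiν : i < ν.length := by simp at h2; omega
  have e1 := hμ i h1
  have e2 := hν i hiν
  simp [List.getD_eq_getElem?_getD, List.getElem?_eq_getElem, h1, hiν] at e1 e2
  simp [List.getElem_take, ← e1, ← e2]

lemma comparable {μ ν : Word} {x : Cantor} (hμ : hasPrefix μ x) (hν : hasPrefix ν x) :
    μ <+: ν ∨ ν <+: μ := by
  rcases le_total μ.length ν.length with h | h
  · exact Or.inl (prefix_of_hasPrefix hμ hν h)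
  · exact Or.inr (prefix_of_hasPrefix hν hμ h)

lemma not_hasPrefix_wcat {μ ν : Word} (h : Incomp μ ν) (y : Cantor) :
    ¬ hasPrefix μ (wcat ν y) := fun hμ =>
  (comparable hμ (hasPrefix_wcat ν y)).elim h.1 h.2

lemma t_wcat_left (α β : Word) (y : Cantor) : t α β (wcat α y) = wcat β y := by
  rw [t, if_pos (hasPrefix_wcat α y), tail_wcat]

lemma t_wcat_right {α β : Word} (h : Incomp α β) (y : Cantor) :
    t α β (wcat β y) = wcat α y := by
  rw [t, if_neg (not_hasPrefix_wcat h y), if_pos (hasPrefix_wcat β y), tail_wcat]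

lemma t_fix {α β : Word} {x : Cantor} (hα : ¬ hasPrefix α x) (hβ : ¬ hasPrefix β x) :
    t α β x = x := by
  rw [t, if_neg hα, if_neg hβ]

lemma t_invol {α β : Word} (h : Incomp α β) (x : Cantor) : t α β (t α β x) = x := by
  by_cases hα : hasPrefix α x
  · rw [← wcat_eq_self hα, t_wcat_left, t_wcat_right h]
  · by_cases hβ : hasPrefix β x
    · rw [← wcat_eq_self hβ, t_wcat_right h, t_wcat_left]
    · rw [t_fix hα hβ, t_fix hα hβ]

lemma wcat_append (μ ν : Word) (y : Cantor) :
    wcat (μ ++ ν) y = wcat μ (wcat ν y) := by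
  funext n
  simp only [wcat, List.length_append]
  by_cases h1 : n < μ.length
  · simp [h1, Nat.lt_add_right ν.length h1, List.getD_append _ _ _ _ h1, List.getElem_append_left]
  · simp only [if_neg h1]
    by_cases h2 : n < μ.length + ν.length
    · rw [if_pos h2, if_pos (by omega), List.getD_append_right _ _ _ _ (by omega)]
    · rw [if_neg h2, if_neg (by omega)]
      congr 1
      omega

lemma t_wsub {γ δ μ μ' : Word} (h : Incomp γ δ) (hw : wsub γ δ μ = some μ') (y : Cantor) :
    t γ δ (wcat μ y) = wcat μ' y := by
  unfold wsub at hw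
  split_ifs at hw with h1 h2 h3
  · obtain ⟨σ, rfl⟩ := h1
    injection hw with hw; subst hw
    rw [List.drop_left, wcat_append, t_wcat_left, ← wcat_append]
  · obtain ⟨σ, rfl⟩ := h2
    injection hw with hw; subst hw
    rw [List.drop_left, wcat_append, t_wcat_right h, ← wcat_append]
  · injection hw with hw; subst hw
    exact t_fix (not_hasPrefix_wcat ⟨h1, h3.1⟩ y) (not_hasPrefix_wcat ⟨h2, h3.2⟩ y)

lemma t_wsub' {γ δ μ μ' : Word} (h : Incomp γ δ) (hw : wsub γ δ μ = some μ') (y : Cantor) :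
    t γ δ (wcat μ' y) = wcat μ y := by
  rw [← t_wsub h hw y, t_invol h]

lemma wsub_incomp {α β γ δ α' β' : Word} (h : Incomp γ δ) (hαβ : Incomp α β)
    (hα : wsub γ δ α = some α') (hβ : wsub γ δ β = some β') : Incomp α' β' := by
  constructor
  · rintro ⟨τ, rfl⟩
    have h1 : t γ δ (wcat (α' ++ τ) (fun _ => false)) = wcat β (fun _ => false) :=
      t_wsub' h hβ _
    rw [wcat_append, t_wsub' h hα] at h1
    have h2 : hasPrefix β (wcat α (wcat τ fun _ => false)) := by
      rw [h1]; exact hasPrefix_wcat _ _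
    exact (comparable (hasPrefix_wcat α _) h2).elim hαβ.1 hαβ.2
  · rintro ⟨τ, rfl⟩
    have h1 : t γ δ (wcat (β' ++ τ) (fun _ => false)) = wcat α (fun _ => false) :=
      t_wsub' h hα _
    rw [wcat_append, t_wsub' h hβ] at h1
    have h2 : hasPrefix α (wcat β (wcat τ fun _ => false)) := by
      rw [h1]; exact hasPrefix_wcat _ _
    exact (comparable h2 (hasPrefix_wcat β _)).elim hαβ.1 hαβ.2

theorem stmt5 (α β γ δ α' β' : Word) (hαβ : Incomp α β) (hγδ : Incomp γ δ)
    (hα : wsub γ δ α = some α') (hβ : wsub γ δ β = some β') :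
    t γ δ ∘ t α β ∘ t γ δ = t α' β' := by
  have hαβ' : Incomp α' β' := wsub_incomp hγδ hαβ hα hβ
  funext x
  simp only [Function.comp_apply]
  by_cases hα' : hasPrefix α' x
  · rw [← wcat_eq_self hα', t_wsub' hγδ hα, t_wcat_left, t_wsub hγδ hβ,
      t_wcat_left]
  · by_cases hβ' : hasPrefix β' x
    · rw [← wcat_eq_self hβ', t_wsub' hγδ hβ, t_wcat_right hαβ, t_wsub hγδ hα,
        t_wcat_right hαβ']
    · have hz : ∀ μ μ' : Word, wsub γ δ μ = some μ' → ¬ hasPrefix μ' x →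
          ¬ hasPrefix μ (t γ δ x) := by
        intro μ μ' hw hnx hp
        apply hnx
        have h2 : t γ δ (t γ δ x) = wcat μ' (fun n => t γ δ x (n + μ.length)) := by
          conv_lhs => rw [← wcat_eq_self hp, t_wsub hγδ hw]
        rw [t_invol hγδ] at h2
        rw [h2]
        exact hasPrefix_wcat _ _
      rw [t_fix (hz α α' hα hα') (hz β β' hβ hβ'), t_invol hγδ,
        t_fix hα' hβ']
end

section
/- The maps a = t_{00,01} and b = t_{01,10} ∘ t_{01,11} on Cantor space satisfy the symmetric group S₄ relations: a² = id, b³ = id, and (a ∘ b)⁴ = id. -/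
lemma hp2 (u v : Bool) (x : Cantor) : hasPrefix [u, v] x ↔ x 0 = u ∧ x 1 = v := by
  constructor
  · intro h; exact ⟨h 0 (by norm_num), h 1 (by norm_num)⟩
  · rintro ⟨h0, h1⟩ i hi
    simp only [List.length_cons, List.length_nil] at hi
    interval_cases i <;> simpa

lemma wcat2 (u v : Bool) (y : Cantor) (n : ℕ) :
    wcat [u, v] y n = if n = 0 then u else if n = 1 then v else y (n - 2) := by
  rcases n with _ | _ | n <;> simp [wcat]

lemma t2 (u v u' v' : Bool) (x : Cantor) (n : ℕ) :
    t [u, v] [u', v'] x n =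
      if x 0 = u ∧ x 1 = v then (if n = 0 then u' else if n = 1 then v' else x n)
      else if x 0 = u' ∧ x 1 = v' then (if n = 0 then u else if n = 1 then v else x n)
      else x n := by
  rcases n with _ | _ | n <;> simp only [t, hp2, wcat2] <;> split_ifs <;> simp_all [wcat2]

/-- Head-permutation action on Cantor space. -/
def F (σ : Bool × Bool → Bool × Bool) (x : Cantor) : Cantor := fun n =>
  if n = 0 then (σ (x 0, x 1)).1 else if n = 1 then (σ (x 0, x 1)).2 else x n

lemma t_eq_F (u v u' v' : Bool) :
    t [u, v] [u', v'] =
      F (fun p => if p = (u, v) then (u', v') else if p = (u', v') then (u, v) else p) := by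
  funext x n
  rw [t2]
  simp only [F, Prod.mk.injEq, Prod.ext_iff]
  split_ifs <;> simp_all

lemma F_comp (σ τ : Bool × Bool → Bool × Bool) :
    F σ ∘ F τ = F (σ ∘ τ) := by
  funext x n
  simp only [Function.comp_apply, F]
  split_ifs <;> simp_all

lemma F_id (σ : Bool × Bool → Bool × Bool) (h : ∀ p, σ p = p) : F σ = id := by
  funext x n
  simp only [F, h, id_eq]
  split_ifs <;> simp_all

theorem stmt14 :
    letI a : Cantor → Cantor := t [false, false] [false, true]
    letI b : Cantor → Cantor := t [false, true] [true, false] ∘ t [false, true] [true, true]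
    a ∘ a = id ∧ b ∘ b ∘ b = id ∧
      (a ∘ b) ∘ (a ∘ b) ∘ (a ∘ b) ∘ (a ∘ b) = id := by
  simp only [t_eq_F, F_comp]
  refine ⟨F_id _ (by decide), F_id _ (by decide), F_id _ (by decide)⟩
end
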